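/- Under the block Hessenberg structure E_l A E_h = 0 for l > h+1, there exists a constant C > 0 such that for all t ∈ [0,1], all l ≥ h in {1,...,n}, and all unit vectors θ ∈ ℝ^N, one has |E_l e^{tA} E_h θ| ≤ C t^{l-h}. -/

import Mathlib

open Matrix NormedSpace Nat

/-!
By the block Hessenberg structure, each factor `A` raises the block index by at most one, so
`E_l A^k E_h = 0` for `k < l - h`. Hence only the terms `t^k A^k / k!` with `k ≥ l - h` of the
exponential series survive between `E_l` and `E_h`, and for `t ≤ 1` each is bounded by
`t^(l-h) ‖A‖^k / k!`. Orthogonal projections have ℓ² operator norm at most one, so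
`C = exp ‖A‖` works.
-/

theorem mul_pow_mul_eq_zero_of_blockHessenberg {R : Type*} [Semiring R] {n : ℕ}
    (E : Fin n → R) (A : R) (horth : ∀ l h, l ≠ h → E l * E h = 0) (hsum : ∑ h, E h = 1)
    (hstruct : ∀ l h : Fin n, (l : ℕ) > (h : ℕ) + 1 → E l * A * E h = 0) (k : ℕ) :
    ∀ l h : Fin n, (h : ℕ) + k < l → E l * A ^ k * E h = 0 := by
  induction k with
  | zero =>
    intro l h hlt
    rw [pow_zero, mul_one]
    exact horth l h (by rintro rfl; omega)
  | succ k ih =>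
    intro l h hlt
    have hsplit : E l * A ^ (k + 1) * E h = ∑ m, E l * A ^ k * E m * (A * E h) := by
      rw [← Finset.sum_mul, ← Finset.mul_sum, hsum, mul_one, pow_succ]
      simp only [mul_assoc]
    rw [hsplit]
    refine Finset.sum_eq_zero fun m _ => ?_
    rcases lt_or_ge ((m : ℕ) + k) l with hm | hm
    · rw [ih l m hm, zero_mul]
    · rw [mul_assoc, ← mul_assoc (E m), hstruct m h (by omega), mul_zero]

theorem norm_mul_pow_le {R : Type*} [SeminormedRing R] (p a : R) (k : ℕ) :
    ‖p * a ^ k‖ ≤ ‖p‖ * ‖a‖ ^ k := by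
  induction k with
  | zero => simp
  | succ k ih =>
    calc ‖p * a ^ (k + 1)‖ = ‖p * a ^ k * a‖ := by rw [pow_succ, mul_assoc]
      _ ≤ ‖p * a ^ k‖ * ‖a‖ := norm_mul_le _ _
      _ ≤ ‖p‖ * ‖a‖ ^ (k + 1) := by rw [pow_succ, ← mul_assoc]; gcongr

theorem norm_mul_exp_smul_mul_le {𝔸 : Type*} [NormedRing 𝔸] [NormedAlgebra ℝ 𝔸]
    [CompleteSpace 𝔸] {p a q : 𝔸} {d : ℕ} (h : ∀ k < d, p * a ^ k * q = 0) {t : ℝ}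
    (ht0 : 0 ≤ t) (ht1 : t ≤ 1) :
    ‖p * exp (t • a) * q‖ ≤ ‖p‖ * ‖q‖ * Real.exp ‖a‖ * t ^ d := by
  have hexp : HasSum (fun k : ℕ => ((k ! : ℝ)⁻¹ * t ^ k) • (p * a ^ k * q))
      (p * exp (t • a) * q) := by
    have := ((exp_series_hasSum_exp' (𝕂 := ℝ) (t • a)).mul_left p).mul_right q
    simpa only [smul_pow, smul_smul, mul_smul_comm, smul_mul_assoc] using this
  have hbound : HasSum (fun k : ℕ => ‖p‖ * ‖q‖ * t ^ d * (‖a‖ ^ k / k !))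
      (‖p‖ * ‖q‖ * t ^ d * Real.exp ‖a‖) := by
    rw [Real.exp_eq_exp_ℝ]
    exact (expSeries_div_hasSum_exp ‖a‖).mul_left _
  refine (hexp.norm_le_of_bounded hbound fun k => ?_).trans_eq (by ring)
  rcases lt_or_ge k d with hk | hk
  · rw [h k hk, smul_zero, norm_zero]
    positivity
  · have htk : t ^ k ≤ t ^ d := pow_le_pow_of_le_one ht0 ht1 hk
    have hpaq : ‖p * a ^ k * q‖ ≤ ‖p‖ * ‖a‖ ^ k * ‖q‖ :=
      (norm_mul_le _ _).trans (by gcongr; exact norm_mul_pow_le p a k)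
    rw [norm_smul, Real.norm_of_nonneg (by positivity)]
    calc (k ! : ℝ)⁻¹ * t ^ k * ‖p * a ^ k * q‖
        ≤ (k ! : ℝ)⁻¹ * t ^ d * (‖p‖ * ‖a‖ ^ k * ‖q‖) := by gcongr
      _ = ‖p‖ * ‖q‖ * t ^ d * (‖a‖ ^ k / k !) := by ring

theorem Matrix.isStarProjection_of_transpose_eq {m R : Type*} [Fintype m] [Mul R]
    [AddCommMonoid R] [Star R] [TrivialStar R] {P : Matrix m m R} (hidem : P * P = P)
    (hsym : Pᵀ = P) : IsStarProjection P :=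
  ⟨hidem, by rw [IsSelfAdjoint, star_eq_conjTranspose, conjTranspose_eq_transpose_of_trivial, hsym]⟩

section

open scoped Matrix.Norms.L2Operator

theorem Matrix.norm_toEuclideanLin_projection_mul_exp_smul_mul_le {N : ℕ}
    {P A Q : Matrix (Fin N) (Fin N) ℝ} (hP : IsStarProjection P) (hQ : IsStarProjection Q)
    {d : ℕ} (h : ∀ k < d, P * A ^ k * Q = 0) {t : ℝ} (ht0 : 0 ≤ t) (ht1 : t ≤ 1)
    (θ : EuclideanSpace ℝ (Fin N)) :
    ‖toEuclideanLin (P * exp (t • A) * Q) θ‖ ≤ Real.exp ‖A‖ * t ^ d * ‖θ‖ := by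
  rw [← coe_toEuclideanCLM_eq_toEuclideanLin]
  refine (ContinuousLinearMap.le_opNorm _ θ).trans
    (mul_le_mul_of_nonneg_right ?_ (norm_nonneg θ))
  calc ‖P * exp (t • A) * Q‖ ≤ ‖P‖ * ‖Q‖ * Real.exp ‖A‖ * t ^ d :=
        norm_mul_exp_smul_mul_le h ht0 ht1
    _ ≤ 1 * 1 * Real.exp ‖A‖ * t ^ d := by
        gcongr
        exacts [hP.norm_le, hQ.norm_le]
    _ = Real.exp ‖A‖ * t ^ d := by ring

end

/-- Under the block Hessenberg structure `E l * A * E h = 0` for `l > h + 1`, there is `C > 0`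
such that `|E_l e^{tA} E_h θ| ≤ C t^{l-h}` for all `t ∈ [0,1]`, `l ≥ h` and unit vectors `θ`. -/
theorem stmt3 (N n : ℕ) (A : Matrix (Fin N) (Fin N) ℝ)
    (E : Fin n → Matrix (Fin N) (Fin N) ℝ)
    (hidem : ∀ h, E h * E h = E h)
    (horth : ∀ l h, l ≠ h → E l * E h = 0)
    (hsym : ∀ h, (E h)ᵀ = E h)
    (hsum : ∑ h, E h = 1)
    (hstruct : ∀ l h : Fin n, (l : ℕ) > (h : ℕ) + 1 → E l * A * E h = 0) :
    ∃ C > 0, ∀ t ∈ Set.Icc (0 : ℝ) 1, ∀ l h : Fin n, (h : ℕ) ≤ (l : ℕ) →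
      ∀ θ : EuclideanSpace ℝ (Fin N), ‖θ‖ = 1 →
      ‖Matrix.toEuclideanLin (E l * NormedSpace.exp (t • A) * E h) θ‖
        ≤ C * t ^ ((l : ℕ) - (h : ℕ)) := by
  have hproj : ∀ h, IsStarProjection (E h) := fun h =>
    isStarProjection_of_transpose_eq (hidem h) (hsym h)
  open scoped Matrix.Norms.L2Operator in
  refine ⟨Real.exp ‖A‖, Real.exp_pos _, fun t ⟨ht0, ht1⟩ l h hlh θ hθ => ?_⟩
  have hvanish : ∀ k < (l : ℕ) - h, E l * A ^ k * E h = 0 := fun k hk =>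
    mul_pow_mul_eq_zero_of_blockHessenberg E A horth hsum hstruct k l h (by omega)
  simpa only [hθ, mul_one] using
    norm_toEuclideanLin_projection_mul_exp_smul_mul_le (hproj l) (hproj h) hvanish ht0 ht1 θ
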